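/- (Forward preservation of the havoc rule.) For all vs : ℕ → var, constraint sets cs, memories s : ℕ → ℤ, and assignments asgn, if asgn satisfies cs and vs^asgn ≡ s, then for every address d : ℕ and every internal choice c : ℤ the following holds: letting x be a variable fresh for both vs and cs, there exists an assignment asgn' such that asgn' satisfies cs and (vs[d ↦ x])^asgn' ≡ s[d ↦ c]. (The witness asgn' := asgn[x ↦ c] works.) -/

import Mathlib

/-- Variables are natural numbers. -/
abbrev Var := ℕ

/-- Binary integer operations: +, −, ×, ÷ (integer division). -/
inductive Op
  | add | sub | mul | div
deriving DecidableEq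

def Op.denote : Op → ℤ → ℤ → ℤ
  | .add => (· + ·)
  | .sub => (· - ·)
  | .mul => (· * ·)
  | .div => (· / ·)

/-- Symbolic server expressions. -/
inductive SExp
  | const : ℤ → SExp
  | read : ℕ → SExp
  | bin : Op → SExp → SExp → SExp
deriving DecidableEq

/-- Evaluation of a server expression on a memory `s : ℕ → ℤ`, written `e^s`. -/
def SExp.eval (s : ℕ → ℤ) : SExp → ℤ
  | .const z => z
  | .read k => s k
  | .bin op e₁ e₂ => op.denote (e₁.eval s) (e₂.eval s)

/-- Validator expressions. -/
inductive VExp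
  | const : ℤ → VExp
  | var : Var → VExp
  | bin : Op → VExp → VExp → VExp
deriving DecidableEq

/-- Evaluation of a validator expression under an assignment, written `e^asgn`. -/
def VExp.eval (asgn : Var → ℤ) : VExp → ℤ
  | .const z => z
  | .var x => asgn x
  | .bin op e₁ e₂ => op.denote (e₁.eval asgn) (e₂.eval asgn)

/-- Symbolization `e^vs` of a server expression: replace every `read src` by `var (vs src)`. -/
def SExp.symb (vs : ℕ → Var) : SExp → VExp
  | .const z => .const z
  | .read k => .var (vs k)
  | .bin op e₁ e₂ => .bin op (e₁.symb vs) (e₂.symb vs)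

/-- Comparison operators for constraints: <, ≤, =. -/
inductive Cmp
  | lt | le | eq
deriving DecidableEq

def Cmp.holds : Cmp → ℤ → ℤ → Prop
  | .lt => (· < ·)
  | .le => (· ≤ ·)
  | .eq => (· = ·)

/-- A constraint is a triple of two validator expressions and a comparison. -/
structure Constraint where
  lhs : VExp
  cmp : Cmp
  rhs : VExp
deriving DecidableEq

/-- `asgn` satisfies the constraint set `cs`. -/
def Sat (asgn : Var → ℤ) (cs : Finset Constraint) : Prop :=
  ∀ c ∈ cs, c.cmp.holds (c.lhs.eval asgn) (c.rhs.eval asgn)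

/-- A variable occurs in a validator expression. -/
def VExp.occurs (x : Var) : VExp → Prop
  | .const _ => False
  | .var y => y = x
  | .bin _ e₁ e₂ => e₁.occurs x ∨ e₂.occurs x

/-- `x` is fresh for the constraint set `cs`: it occurs in no constraint of `cs`. -/
def FreshCs (x : Var) (cs : Finset Constraint) : Prop :=
  ∀ c ∈ cs, ¬ c.lhs.occurs x ∧ ¬ c.rhs.occurs x

/-- `x` is fresh for `vs : ℕ → Var`. -/
def FreshVs (x : Var) (vs : ℕ → Var) : Prop :=
  ∀ k : ℕ, vs k ≠ x

lemma VExp.eval_update_of_not_occurs {e : VExp} {x : Var} (h : ¬ e.occurs x)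
    (asgn : Var → ℤ) (c : ℤ) : e.eval (Function.update asgn x c) = e.eval asgn := by
  induction e with
  | const z => rfl
  | var y => exact Function.update_of_ne h c asgn
  | bin op e₁ e₂ ih₁ ih₂ =>
    rw [VExp.occurs, not_or] at h
    simp only [VExp.eval, ih₁ h.1, ih₂ h.2]

lemma Sat.update_of_freshCs {asgn : Var → ℤ} {cs : Finset Constraint} {x : Var}
    (hsat : Sat asgn cs) (hx : FreshCs x cs) (c : ℤ) : Sat (Function.update asgn x c) cs := by
  intro cst hc
  rw [VExp.eval_update_of_not_occurs (hx cst hc).1, VExp.eval_update_of_not_occurs (hx cst hc).2]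
  exact hsat cst hc

lemma update_comp_update_of_forall_ne {α β γ : Type*} [DecidableEq α] [DecidableEq γ]
    {g : α → β} {f : γ → α} {x : α} (hx : ∀ k, f k ≠ x) (d : γ) (c : β) :
    Function.update g x c ∘ Function.update f d x = Function.update (g ∘ f) d c := by
  rw [Function.comp_update, Function.update_comp_eq_of_forall_ne _ _ hx, Function.update_self]

/-- Forward preservation of the havoc rule. -/
theorem havoc_forward_preservation
    (vs : ℕ → Var) (cs : Finset Constraint) (s : ℕ → ℤ) (asgn : Var → ℤ)
    (hsat : Sat asgn cs) (hrefl : ∀ k : ℕ, asgn (vs k) = s k)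
    (d : ℕ) (c : ℤ)
    (x : Var) (hxvs : FreshVs x vs) (hxcs : FreshCs x cs) :
    ∃ asgn' : Var → ℤ,
      Sat asgn' cs ∧
      ∀ k : ℕ, asgn' (Function.update vs d x k) = Function.update s d c k := by
  refine ⟨Function.update asgn x c, hsat.update_of_freshCs hxcs c, fun k => ?_⟩
  have hmem : asgn ∘ vs = s := funext hrefl
  rw [← Function.comp_apply (f := Function.update asgn x c),
    update_comp_update_of_forall_ne hxvs, hmem]
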